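/- For the operators K_n and x ≥ 1/2, the second moment satisfies K_n(t²; x) = x² + (1/n)(1 + 2μ e_μ(−n r_n(x))/e_μ(n r_n(x))) x − (1/n²)(5/12 + μ e_μ(−n r_n(x))/e_μ(n r_n(x))). -/

import Mathlib

noncomputable section

/-- θ_k = 0 if k even, 1 if k odd. -/
def theta (k : ℕ) : ℝ := if Even k then 0 else 1

/-- Dunkl coefficients γ_μ(n). -/
def gammaD (mu : ℝ) (n : ℕ) : ℝ :=
  if Even n then
    2 ^ n * (Nat.factorial (n / 2)) * Real.Gamma ((n / 2 : ℕ) + mu + 1 / 2) / Real.Gamma (mu + 1 / 2)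
  else
    2 ^ n * (Nat.factorial (n / 2)) * Real.Gamma ((n / 2 : ℕ) + mu + 3 / 2) / Real.Gamma (mu + 1 / 2)

/-- Dunkl exponential e_μ(x) = Σ xⁿ/γ_μ(n). -/
def eD (mu x : ℝ) : ℝ := ∑' n : ℕ, x ^ n / gammaD mu n

/-- r_n(x) = x - 1/(2n). -/
def rn (n : ℕ) (x : ℝ) : ℝ := x - 1 / (2 * n)

/-- Modified Dunkl Szász–Mirakjan–Kantorovich operator K_n. -/
def Kn (mu : ℝ) (n : ℕ) (f : ℝ → ℝ) (x : ℝ) : ℝ :=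
  (n / eD mu (n * rn n x)) * ∑' k : ℕ, (n * rn n x) ^ k / gammaD mu k *
    ∫ t in (((k : ℝ) + 2 * mu * theta k) / n)..(((k : ℝ) + 1 + 2 * mu * theta k) / n), f t

/-- Stancu-type modified Dunkl Szász–Kantorovich operator K_n^*. -/
def KnStar (mu a b : ℝ) (n : ℕ) (f : ℝ → ℝ) (x : ℝ) : ℝ :=
  (n / eD mu (n * rn n x)) * ∑' k : ℕ, (n * rn n x) ^ k / gammaD mu k *
    ∫ t in (((k : ℝ) + 2 * mu * theta k) / n)..(((k : ℝ) + 1 + 2 * mu * theta k) / n),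
      f ((n * t + a) / (n + b))

/-- Dunkl Szász–Kantorovich–Stancu operator T_n^*. -/
def TnStar (mu a b : ℝ) (n : ℕ) (f : ℝ → ℝ) (x : ℝ) : ℝ :=
  (n / eD mu (n * x)) * ∑' k : ℕ, (n * x) ^ k / gammaD mu k *
    ∫ t in (((k : ℝ) + 2 * mu * theta k) / n)..(((k : ℝ) + 1 + 2 * mu * theta k) / n),
      f ((n * t + a) / (n + b))

/-- Modulus of continuity of f on [0,∞). -/
def modCont (f : ℝ → ℝ) (d : ℝ) : ℝ :=
  sSup {y | ∃ t s : ℝ, 0 ≤ t ∧ 0 ≤ s ∧ |t - s| ≤ d ∧ y = |f t - f s|}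

/-! The Dunkl coefficients satisfy `γ_μ(k+1) = [k+1]_μ γ_μ(k)` with `[k]_μ = k + 2μθ_k`, which is
also `n` times the left end of the `k`-th integration cell of `K_n`. Hence multiplying the terms of
`e_μ(y)` by `[k]_μ` shifts the series and gives `y e_μ(y)`, and multiplying by `[k]_μ²` gives
`y² e_μ(y) + y e_μ(y) + 2μ y e_μ(-y)`, the last term coming from `[k+1]_μ - [k]_μ = 1 + 2μ(-1)^k`.
Since `∫_{a/n}^{(a+1)/n} t² dt = (a² + a + 1/3)/n³`, the second moment is
`(y² + 2y + 1/3 + 2μ y e_μ(-y)/e_μ(y))/n²` with `y = n x - 1/2`. -/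

/-- Rosenblum's `μ`-integer `[k]_μ`. -/
def dunklNum (mu : ℝ) (k : ℕ) : ℝ := k + 2 * mu * theta k

lemma theta_nonneg (k : ℕ) : 0 ≤ theta k := by
  unfold theta; split_ifs <;> norm_num

lemma theta_succ (k : ℕ) : theta (k + 1) = theta k + (-1) ^ k := by
  rcases Nat.even_or_odd k with h | h
  · simp [theta, Nat.even_add_one, h, h.neg_one_pow]
  · simp [theta, h, Nat.not_even_iff_odd.2 h, h.neg_one_pow]

lemma dunklNum_zero (mu : ℝ) : dunklNum mu 0 = 0 := by
  simp [dunklNum, theta]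

lemma dunklNum_succ (mu : ℝ) (k : ℕ) :
    dunklNum mu (k + 1) = dunklNum mu k + 1 + 2 * mu * (-1) ^ k := by
  simp only [dunklNum, theta_succ]
  push_cast
  ring

lemma dunklNum_succ_pos {mu : ℝ} (hmu : -(1 / 2) < mu) (k : ℕ) : 0 < dunklNum mu (k + 1) := by
  unfold dunklNum theta
  split_ifs <;> push_cast <;> linarith [(k.cast_nonneg : (0 : ℝ) ≤ k)]

lemma gammaD_zero {mu : ℝ} (hmu : -(1 / 2) < mu) : gammaD mu 0 = 1 := by
  have hΓ : Real.Gamma (mu + 1 / 2) ≠ 0 := (Real.Gamma_pos_of_pos (by linarith)).ne'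
  simpa [gammaD] using div_self hΓ

lemma gammaD_succ {mu : ℝ} (hmu : -(1 / 2) < mu) (k : ℕ) :
    gammaD mu (k + 1) = dunklNum mu (k + 1) * gammaD mu k := by
  rcases Nat.even_or_odd' k with ⟨m, rfl | rfl⟩
  · have hodd : ¬ Even (2 * m + 1) := Nat.not_even_two_mul_add_one m
    have hΓ : Real.Gamma ((m : ℝ) + mu + 3 / 2)
        = ((m : ℝ) + mu + 1 / 2) * Real.Gamma ((m : ℝ) + mu + 1 / 2) := by
      rw [← Real.Gamma_add_one (by linarith [(m.cast_nonneg : (0 : ℝ) ≤ m)])]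
      ring_nf
    simp only [gammaD, dunklNum, theta, even_two_mul, hodd, if_true, if_false,
      show (2 * m + 1) / 2 = m by omega, show 2 * m / 2 = m by omega, hΓ]
    push_cast
    ring
  · have heven : Even (2 * m + 1 + 1) := ⟨m + 1, by ring⟩
    simp only [gammaD, dunklNum, theta, heven, Nat.not_even_two_mul_add_one, if_true, if_false,
      show (2 * m + 1 + 1) / 2 = m + 1 by omega, show (2 * m + 1) / 2 = m by omega,
      Nat.factorial_succ]
    push_cast
    ring_nf

lemma gammaD_pos {mu : ℝ} (hmu : -(1 / 2) < mu) (k : ℕ) : 0 < gammaD mu k := by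
  induction k with
  | zero => simp [gammaD_zero hmu]
  | succ k ih => rw [gammaD_succ hmu]; exact mul_pos (dunklNum_succ_pos hmu k) ih

lemma factorial_le_gammaD {mu : ℝ} (hmu : 0 ≤ mu) (k : ℕ) : (k.factorial : ℝ) ≤ gammaD mu k := by
  have hmu' : -(1 / 2) < mu := by linarith
  induction k with
  | zero => simp [gammaD_zero hmu']
  | succ k ih =>
    rw [gammaD_succ hmu', Nat.factorial_succ, Nat.cast_mul]
    have hk : ((k + 1 : ℕ) : ℝ) ≤ dunklNum mu (k + 1) :=
      le_add_of_nonneg_right (by have := theta_nonneg (k + 1); positivity)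
    exact mul_le_mul hk ih (by positivity) (dunklNum_succ_pos hmu' k).le

lemma hasSum_eD {mu : ℝ} (hmu : 0 ≤ mu) (y : ℝ) :
    HasSum (fun k => y ^ k / gammaD mu k) (eD mu y) := by
  refine (Summable.of_norm_bounded (Real.summable_pow_div_factorial |y|) fun k => ?_).hasSum
  rw [Real.norm_eq_abs, abs_div, abs_pow, abs_of_pos (gammaD_pos (by linarith) k)]
  gcongr
  exact factorial_le_gammaD hmu k

lemma eD_pos {mu : ℝ} (hmu : 0 ≤ mu) {y : ℝ} (hy : 0 ≤ y) : 0 < eD mu y := by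
  have hterm : ∀ k, 0 ≤ y ^ k / gammaD mu k :=
    fun k => div_nonneg (pow_nonneg hy k) (gammaD_pos (by linarith) k).le
  have := le_hasSum (hasSum_eD hmu y) 0 fun k _ => hterm k
  simp only [pow_zero, gammaD_zero (show -(1 / 2) < mu by linarith), div_one] at this
  linarith

lemma dunklNum_succ_mul_term {mu : ℝ} (hmu : -(1 / 2) < mu) (y : ℝ) (k : ℕ) :
    dunklNum mu (k + 1) * (y ^ (k + 1) / gammaD mu (k + 1)) = y * (y ^ k / gammaD mu k) := by
  rw [gammaD_succ hmu, pow_succ]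
  field_simp [(dunklNum_succ_pos hmu k).ne', (gammaD_pos hmu k).ne']

lemma hasSum_dunklNum_mul {mu : ℝ} (hmu : 0 ≤ mu) (y : ℝ) :
    HasSum (fun k => dunklNum mu k * (y ^ k / gammaD mu k)) (y * eD mu y) := by
  rw [← hasSum_nat_add_iff' 1]
  simpa [dunklNum_zero, dunklNum_succ_mul_term (show -(1 / 2) < mu by linarith)]
    using (hasSum_eD hmu y).mul_left y

lemma hasSum_dunklNum_sq_mul {mu : ℝ} (hmu : 0 ≤ mu) (y : ℝ) :
    HasSum (fun k => dunklNum mu k ^ 2 * (y ^ k / gammaD mu k))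
      (y ^ 2 * eD mu y + y * eD mu y + 2 * mu * y * eD mu (-y)) := by
  have hshift (k : ℕ) : dunklNum mu (k + 1) ^ 2 * (y ^ (k + 1) / gammaD mu (k + 1))
      = y * (dunklNum mu k * (y ^ k / gammaD mu k)) + y * (y ^ k / gammaD mu k)
        + 2 * mu * y * ((-y) ^ k / gammaD mu k) := by
    rw [sq, mul_assoc, dunklNum_succ_mul_term (by linarith), dunklNum_succ, neg_pow]
    ring
  rw [show y ^ 2 * eD mu y = y * (y * eD mu y) by ring, ← hasSum_nat_add_iff' 1]
  simpa [hshift, dunklNum_zero] using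
    (((hasSum_dunklNum_mul hmu y).mul_left y).add ((hasSum_eD hmu y).mul_left y)).add
      ((hasSum_eD hmu (-y)).mul_left (2 * mu * y))

lemma integral_sq_add (a h : ℝ) : ∫ t in a..a + h, t ^ 2 = h * (a ^ 2 + a * h + h ^ 2 / 3) := by
  rw [integral_pow]
  ring

theorem Kn_sq (mu : ℝ) (hmu : 0 ≤ mu) (n : ℕ) (hn : 0 < n) (x : ℝ) (hx : 1 / 2 ≤ x) :
    Kn mu n (fun t => t ^ 2) x
      = x ^ 2
        + (1 / n) * (1 + 2 * mu * eD mu (-(n * rn n x)) / eD mu (n * rn n x)) * x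
        - (1 / n ^ 2) * (5 / 12 + mu * eD mu (-(n * rn n x)) / eD mu (n * rn n x)) := by
  have hn' : (0 : ℝ) < n := Nat.cast_pos.mpr hn
  rw [Kn]
  set y := n * rn n x with hy_def
  have hy : y = n * x - 1 / 2 := by rw [hy_def, rn]; field_simp
  have hn1 : (1 : ℝ) ≤ n := by exact_mod_cast hn
  have hE : 0 < eD mu y := eD_pos hmu (by rw [hy]; nlinarith)
  have hterm (k : ℕ) : y ^ k / gammaD mu k *
      ∫ t in ((k : ℝ) + 2 * mu * theta k) / n..((k : ℝ) + 1 + 2 * mu * theta k) / n, t ^ 2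
      = (dunklNum mu k ^ 2 * (y ^ k / gammaD mu k) + dunklNum mu k * (y ^ k / gammaD mu k)
          + y ^ k / gammaD mu k / 3) / n ^ 3 := by
    rw [show ((k : ℝ) + 1 + 2 * mu * theta k) / n = ((k : ℝ) + 2 * mu * theta k) / n + 1 / n by
      ring, integral_sq_add, dunklNum]
    field_simp
  have hsum := (((hasSum_dunklNum_sq_mul hmu y).add (hasSum_dunklNum_mul hmu y)).add
    ((hasSum_eD hmu y).div_const 3)).div_const ((n : ℝ) ^ 3)
  rw [tsum_congr hterm, hsum.tsum_eq, show x = (y + 1 / 2) / n by rw [hy]; field_simp; ring]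
  field_simp
  ring
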